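/- If θ₁ is an inner function, then the subspace K_{θ₁} ⊕ H²₋ of H² ⊕ H²₋ is invariant under S ⊕ S₊ if and only if θ₁ is a unimodular constant. -/

import Mathlib

open MeasureTheory Complex Real
open scoped ComplexConjugate ENNReal

noncomputable section

namespace SS

abbrev T : ℝ := 2 * Real.pi

instance : Fact (0 < T) := ⟨by positivity⟩

/-- Normalized Haar (Lebesgue) measure on the circle. -/
abbrev μ : Measure (AddCircle T) := AddCircle.haarAddCircle

/-- The space `L²` of the circle. -/
abbrev L2 := Lp ℂ 2 μ

/-- The Hardy space `H²`: the closed span of the nonnegative Fourier modes. -/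
def H2 : Submodule ℂ L2 :=
  (Submodule.span ℂ {f : L2 | ∃ n : ℕ, f = fourierLp 2 (n : ℤ)}).topologicalClosure

instance : CompleteSpace H2 :=
  (Submodule.isClosed_topologicalClosure _).completeSpace_coe

/-- `H²₋ = L² ⊖ H²`. -/
def H2m : Submodule ℂ L2 := H2ᗮ

instance : CompleteSpace H2m :=
  (Submodule.isClosed_orthogonal H2).completeSpace_coe

/-- Orthogonal projection `P₊` of `L²` onto `H²`, seen as an operator on `L²`. -/
def Pplus : L2 →ₗ[ℂ] L2 := H2.subtype.comp H2.orthogonalProjectionOnto.toLinearMap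

/-- Orthogonal projection `P₋` of `L²` onto `H²₋`, seen as an operator on `L²`. -/
def Pminus : L2 →ₗ[ℂ] L2 := H2m.subtype.comp H2m.orthogonalProjectionOnto.toLinearMap

theorem memL2_mul_of_bound {φ : AddCircle T → ℂ} (hm : AEStronglyMeasurable φ μ)
    {C : ℝ} (hb : ∀ᵐ t ∂μ, ‖φ t‖ ≤ C) (f : L2) :
    MemLp (fun t => φ t * (f : AddCircle T → ℂ) t) 2 μ := by
  have h1 : MemLp φ ∞ μ := memLp_top_of_bound hm C hb
  exact (Lp.memLp f).mul' (r := 2) h1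

/-- Multiplication by a bounded measurable function, as an operator on `L²`. -/
def mulOp (φ : AddCircle T → ℂ) (hm : AEStronglyMeasurable φ μ)
    {C : ℝ} (hb : ∀ᵐ t ∂μ, ‖φ t‖ ≤ C) : L2 →ₗ[ℂ] L2 where
  toFun f := (memL2_mul_of_bound hm hb f).toLp _
  map_add' f g := by
    apply Lp.ext
    filter_upwards [MemLp.coeFn_toLp (memL2_mul_of_bound hm hb (f + g)),
      MemLp.coeFn_toLp (memL2_mul_of_bound hm hb f),
      MemLp.coeFn_toLp (memL2_mul_of_bound hm hb g),
      Lp.coeFn_add ((memL2_mul_of_bound hm hb f).toLp _)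
        ((memL2_mul_of_bound hm hb g).toLp _),
      Lp.coeFn_add f g] with t h1 h2 h3 h4 h5
    simp only [h1, h4, Pi.add_apply, h2, h3, h5]
    ring
  map_smul' c f := by
    apply Lp.ext
    filter_upwards [MemLp.coeFn_toLp (memL2_mul_of_bound hm hb (c • f)),
      MemLp.coeFn_toLp (memL2_mul_of_bound hm hb f),
      Lp.coeFn_smul c ((memL2_mul_of_bound hm hb f).toLp _),
      Lp.coeFn_smul c f] with t h1 h2 h3 h4
    simp only [RingHom.id_apply, h1, h3, Pi.smul_apply, h2, h4, smul_eq_mul]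
    ring

/-- The function `e^{it}` on the circle. -/
def φz : AddCircle T → ℂ := fun t => fourier 1 t

theorem φz_meas : AEStronglyMeasurable φz μ := (fourier 1).continuous.aestronglyMeasurable

theorem φz_bound : ∀ᵐ t ∂μ, ‖φz t‖ ≤ 1 :=
  Filter.Eventually.of_forall fun t => le_of_eq (Circle.norm_coe _)

/-- Multiplication by `z = e^{it}` on `L²`. -/
def Mz : L2 →ₗ[ℂ] L2 := mulOp φz φz_meas φz_bound

/-- The operator `S ⊕ S₊` on `L² = H² ⊕ H²₋` (internal orthogonal decomposition):
it acts as `Mz` on the `H²`-component and as `P₋ Mz` on the `H²₋`-component. -/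
def D : L2 →ₗ[ℂ] L2 := Mz.comp Pplus + (Pminus.comp (Mz.comp Pminus))

/-- The set `φ·M ⊆ L²`, for a function `φ` on the circle and a set `M ⊆ L²`,
defined via a.e. representatives. -/
def mulSet (φ : AddCircle T → ℂ) (M : Set L2) : Set L2 :=
  {g | ∃ f ∈ M, ⇑g =ᵐ[μ] fun t => φ t * f t}

/-- The model space `K_θ = H² ⊖ θH²`, as a subset of `L²`. -/
def Kset (θ : AddCircle T → ℂ) : Set L2 :=
  {f | f ∈ H2 ∧ ∀ g ∈ mulSet θ (H2 : Set L2), inner (𝕜 := ℂ) g f = 0}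

/-- `θ` is (the boundary function of) an inner function: it is measurable, its negative
Fourier coefficients vanish (i.e. it belongs to `H²`, hence to `H^∞`), and it has
unimodular boundary values a.e. -/
structure IsInner (θ : AddCircle T → ℂ) : Prop where
  meas : AEStronglyMeasurable θ μ
  coeff : ∀ n : ℤ, n < 0 → fourierCoeff θ n = 0
  unimod : ∀ᵐ t ∂μ, ‖θ t‖ = 1

/-- `φ` is (the boundary function of) an element of the closed unit ball of `H^∞`. -/
structure MemBallHinf (φ : AddCircle T → ℂ) : Prop where
  meas : AEStronglyMeasurable φ μ
  coeff : ∀ n : ℤ, n < 0 → fourierCoeff φ n = 0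
  bound : ∀ᵐ t ∂μ, ‖φ t‖ ≤ 1

theorem IsInner.memBall {θ : AddCircle T → ℂ} (h : IsInner θ) : MemBallHinf θ :=
  ⟨h.meas, h.coeff, h.unimod.mono fun _ ht => le_of_eq ht⟩

theorem aeNeg {g g' : AddCircle T → ℂ} (h : g =ᵐ[μ] g') :
    (fun t => g (-t)) =ᵐ[μ] fun t => g' (-t) :=
  (Measure.measurePreserving_neg μ).quasiMeasurePreserving.ae_eq_comp h

theorem memL2_J (f : L2) :
    MemLp (fun t => (fourier (-1) t : ℂ) * (f : L2) (-t)) 2 μ := by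
  have h1 : MemLp (fun t : AddCircle T => (f : L2) (-t)) 2 μ :=
    (Lp.memLp f).comp_measurePreserving (Measure.measurePreserving_neg μ)
  have h2 : MemLp (fun t : AddCircle T => (fourier (-1) t : ℂ)) ∞ μ :=
    memLp_top_of_bound (fourier (-1)).continuous.aestronglyMeasurable 1
      (Filter.Eventually.of_forall fun _ => le_of_eq (Circle.norm_coe _))
  exact h1.mul' (r := 2) h2

/-- The operator `J` on `L²`: `(Jf)(e^{it}) = e^{-it} f(e^{-it})`. -/
def Jop : L2 →ₗ[ℂ] L2 where
  toFun f := (memL2_J f).toLp _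
  map_add' f g := by
    apply Lp.ext
    filter_upwards [MemLp.coeFn_toLp (memL2_J (f + g)), MemLp.coeFn_toLp (memL2_J f),
      MemLp.coeFn_toLp (memL2_J g),
      Lp.coeFn_add ((memL2_J f).toLp _) ((memL2_J g).toLp _),
      aeNeg (Lp.coeFn_add f g)] with t h1 h2 h3 h4 h5
    simp only [h1, h4, Pi.add_apply, h2, h3, h5]
    ring
  map_smul' c f := by
    apply Lp.ext
    filter_upwards [MemLp.coeFn_toLp (memL2_J (c • f)), MemLp.coeFn_toLp (memL2_J f),
      Lp.coeFn_smul c ((memL2_J f).toLp _),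
      aeNeg (Lp.coeFn_smul c f)] with t h1 h2 h3 h4
    simp only [RingHom.id_apply, h1, h3, Pi.smul_apply, h2, h4, smul_eq_mul]
    ring

/-- The subspace `Y = {(θ₂₁u₁+θ₂₂u₂) ⊕ P₋(conj θ₁₁ u₁ + conj θ₁₂ u₂) : u₁,u₂ ∈ H²}`
inside `L² = H² ⊕ H²₋` (internal orthogonal decomposition). -/
def YSet (θ11 θ12 θ21 θ22 : AddCircle T → ℂ) : Set L2 :=
  {y | ∃ u1 ∈ (H2 : Set L2), ∃ u2 ∈ (H2 : Set L2), ∃ g h : L2, g ∈ H2 ∧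
    (⇑g =ᵐ[μ] fun t => θ21 t * u1 t + θ22 t * u2 t) ∧
    (⇑h =ᵐ[μ] fun t => (starRingEnd ℂ) (θ11 t) * u1 t + (starRingEnd ℂ) (θ12 t) * u2 t) ∧
    y = g + Pminus h}

/-- `g` is (the boundary function of) an outer function:
`log |g(0)| = ∫ log |g| dm`, where `g(0)` is the 0-th Fourier coefficient. -/
structure IsOuter (g : AddCircle T → ℂ) : Prop where
  meas : AEStronglyMeasurable g μ
  coeff : ∀ n : ℤ, n < 0 → fourierCoeff g n = 0
  ne_zero : ¬ g =ᵐ[μ] 0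
  outer : Real.log ‖fourierCoeff g 0‖ = ∫ t, Real.log ‖g t‖ ∂μ


/-! ### Auxiliary lemmas -/

lemma fourierCoeff_congr_ae {f g : AddCircle T → ℂ} (h : f =ᵐ[μ] g) (n : ℤ) :
    fourierCoeff f n = fourierCoeff g n :=
  integral_congr_ae (h.mono fun t ht => by simp only [ht])

lemma inner_fourierLp (f : L2) (n : ℤ) :
    inner (𝕜 := ℂ) (fourierLp 2 n : L2) f = fourierCoeff (⇑f) n := by
  have h1 := fourierBasis_repr f n
  rw [← h1, (@fourierBasis T _).repr_apply_apply, coe_fourierBasis]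

lemma fourierLp_mem_H2 (n : ℕ) : (fourierLp 2 (n : ℤ) : L2) ∈ H2 :=
  Submodule.le_topologicalClosure _ (Submodule.subset_span ⟨n, rfl⟩)

lemma mem_H2_of_coeff {f : L2} (h : ∀ n : ℤ, n < 0 → fourierCoeff (⇑f) n = 0) :
    f ∈ H2 := by
  have hs := (@fourierBasis T _).hasSum_repr f
  refine (Submodule.isClosed_topologicalClosure _).mem_of_tendsto hs ?_
  filter_upwards with s
  refine Submodule.sum_mem _ fun i _ => ?_
  rcases lt_or_ge i 0 with hi | hi
  · have h0 : (@fourierBasis T _).repr f i = 0 := by rw [fourierBasis_repr]; exact h i hi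
    rw [h0, zero_smul]; exact Submodule.zero_mem _
  · have hmem : fourierLp 2 i ∈ H2 := by
      have := fourierLp_mem_H2 i.toNat
      rwa [Int.toNat_of_nonneg hi] at this
    exact Submodule.smul_mem _ _ (show ⇑(@fourierBasis T _) i ∈ H2 by
      rw [coe_fourierBasis]; exact hmem)

lemma mem_H2_coeff_zero {f : L2} (hf : f ∈ H2) {n : ℤ} (hn : n < 0) :
    fourierCoeff (⇑f) n = 0 := by
  rw [← inner_fourierLp]
  have hH : H2 ≤ (ℂ ∙ (fourierLp 2 n : L2))ᗮ := by
    refine Submodule.topologicalClosure_minimal _ ?_ (Submodule.isClosed_orthogonal _)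
    rw [Submodule.span_le]
    rintro g ⟨m, rfl⟩
    rw [SetLike.mem_coe, Submodule.mem_orthogonal_singleton_iff_inner_right]
    have hne : n ≠ (m : ℤ) := by omega
    have := (@fourierBasis T _).orthonormal.2 hne
    rwa [coe_fourierBasis] at this
  exact Submodule.mem_orthogonal_singleton_iff_inner_right.mp (hH hf)

lemma memℒp_two_of_bound {φ : AddCircle T → ℂ} (hm : AEStronglyMeasurable φ μ) {C : ℝ}
    (hb : ∀ᵐ t ∂μ, ‖φ t‖ ≤ C) : MemLp φ 2 μ :=
  (memLp_top_of_bound hm C hb).mono_exponent le_top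

lemma L2_inner_eq (f g : L2) :
    inner (𝕜 := ℂ) f g = ∫ t, conj (f t) * g t ∂μ := by
  rw [MeasureTheory.L2.inner_def]
  exact integral_congr_ae (Filter.Eventually.of_forall fun t => by
    simp only [RCLike.inner_apply, mul_comm])

lemma fourierCoeff_conj (g : AddCircle T → ℂ) (n : ℤ) :
    fourierCoeff (fun t => conj (g t)) n = conj (fourierCoeff g (-n)) := by
  unfold fourierCoeff
  rw [← integral_conj]
  refine integral_congr_ae (Filter.Eventually.of_forall fun t => ?_)
  simp only [smul_eq_mul, neg_neg, map_mul, ← fourier_neg]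

lemma fourierCoeff_zero_eq_integral (g : AddCircle T → ℂ) :
    fourierCoeff g 0 = ∫ t, g t ∂μ := by
  unfold fourierCoeff
  refine integral_congr_ae (Filter.Eventually.of_forall fun t => ?_)
  simp only [neg_zero, fourier_zero, one_smul]

lemma inner_fourierLp_fourierLp (n m : ℤ) :
    inner (𝕜 := ℂ) (fourierLp 2 n : L2) (fourierLp 2 m) = if n = m then 1 else 0 := by
  by_cases h : n = m
  · subst h
    rw [if_pos rfl, inner_self_eq_norm_sq_to_K]
    have h1 := (@fourierBasis T _).orthonormal.1 n
    rw [coe_fourierBasis] at h1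
    rw [h1]
    norm_num
  · rw [if_neg h]
    have := (@fourierBasis T _).orthonormal.2 h
    rwa [coe_fourierBasis] at this

/-- The key pairing identity: for `θ` in the unit ball of `H^∞` and `u ∈ H²`,
`∫ θ u = θ̂(0) û(0)`. -/
lemma pairing {θ : AddCircle T → ℂ} (hθ : MemBallHinf θ) {u : L2} (hu : u ∈ H2) :
    ∫ t, θ t * u t ∂μ = fourierCoeff θ 0 * fourierCoeff (⇑u) 0 := by
  set c := fourierCoeff θ 0 with hc
  have hAm : MemLp (fun t => conj (θ t)) 2 μ :=
    memℒp_two_of_bound ((RCLike.continuous_conj (K := ℂ)).comp_aestronglyMeasurable hθ.meas)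
      (hθ.bound.mono fun t ht => by simpa using ht)
  set A : L2 := hAm.toLp _ with hA
  have hAcoe : ⇑A =ᵐ[μ] fun t => conj (θ t) := hAm.coeFn_toLp
  set B : L2 := A - conj c • (fourierLp 2 (0:ℤ) : L2) with hB
  have hH : H2 ≤ (ℂ ∙ B)ᗮ := by
    refine Submodule.topologicalClosure_minimal _ ?_ (Submodule.isClosed_orthogonal _)
    rw [Submodule.span_le]
    rintro g ⟨m, rfl⟩
    rw [SetLike.mem_coe, Submodule.mem_orthogonal_singleton_iff_inner_left]
    rw [hB, inner_sub_right, inner_smul_right, inner_fourierLp A (m:ℤ),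
      inner_fourierLp_fourierLp, fourierCoeff_congr_ae hAcoe, fourierCoeff_conj]
    by_cases hm : ((m:ℕ) : ℤ) = 0
    · rw [hm, if_pos rfl, hc]
      simp
    · rw [hθ.coeff (-(m:ℤ)) (by omega), if_neg hm]
      simp
  have h0 : inner (𝕜 := ℂ) B u = 0 := by
    rw [← inner_conj_symm]
    rw [Submodule.mem_orthogonal_singleton_iff_inner_left.mp (hH hu)]
    simp
  have h1 : inner (𝕜 := ℂ) A u = c * fourierCoeff (⇑u) 0 := by
    have h2 : inner (𝕜 := ℂ) A u - inner (𝕜 := ℂ) (conj c • (fourierLp 2 (0:ℤ) : L2)) u = 0 := by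
      rw [← inner_sub_left]; exact h0
    have h3 := sub_eq_zero.mp h2
    rw [h3, inner_smul_left, inner_fourierLp]
    simp
  rw [← h1, L2_inner_eq]
  refine integral_congr_ae ?_
  filter_upwards [hAcoe] with t ht
  rw [ht]
  simp

lemma Mz_coeFn (f : L2) : ⇑(Mz f) =ᵐ[μ] fun t => fourier 1 t * f t :=
  (memL2_mul_of_bound φz_meas φz_bound f).coeFn_toLp

lemma fourierCoeff_Mz (f : L2) (n : ℤ) :
    fourierCoeff (⇑(Mz f)) n = fourierCoeff (⇑f) (n - 1) := by
  rw [fourierCoeff_congr_ae (Mz_coeFn f)]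
  unfold fourierCoeff
  refine integral_congr_ae (Filter.Eventually.of_forall fun t => ?_)
  have h1 : (-(n - 1)) = (-n) + 1 := by ring
  simp only [smul_eq_mul, h1, fourier_add]
  ring

lemma Mz_mem_H2 {f : L2} (hf : f ∈ H2) : Mz f ∈ H2 :=
  mem_H2_of_coeff fun n hn => by
    rw [fourierCoeff_Mz]; exact mem_H2_coeff_zero hf (by omega)

lemma Mz_pow_coeFn (m : ℕ) (f : L2) :
    ⇑((Mz ^ m) f) =ᵐ[μ] fun t => fourier (m : ℤ) t * f t := by
  induction m with
  | zero =>
    simp only [pow_zero, Module.End.one_apply, Nat.cast_zero]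
    exact Filter.Eventually.of_forall fun t => by simp [fourier_zero]
  | succ k ih =>
    have h1 : (Mz ^ (k + 1)) f = Mz ((Mz ^ k) f) := by
      rw [pow_succ', Module.End.mul_apply]
    rw [h1]
    refine (Mz_coeFn _).trans ?_
    filter_upwards [ih] with t ht
    rw [ht]
    have h2 : ((k + 1 : ℕ) : ℤ) = 1 + (k : ℤ) := by push_cast; ring
    rw [h2, fourier_add, mul_assoc]

lemma D_eq_Mz_of_memH2 {x : L2} (hx : x ∈ H2) : D x = Mz x := by
  show Mz (Pplus x) + Pminus (Mz (Pminus x)) = Mz x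
  have h1 : Pplus x = x := (Submodule.starProjection_eq_self_iff).mpr hx
  have h2 : Pminus x = 0 := by
    have h3 : H2m.orthogonalProjectionOnto x = 0 :=
      Submodule.orthogonalProjectionOnto_apply_of_mem_orthogonal
        (K := H2m) (H2.le_orthogonal_orthogonal hx)
    show H2m.subtype (H2m.orthogonalProjectionOnto x) = 0
    rw [h3]; rfl
  rw [h1, h2, map_zero, map_zero, add_zero]

lemma Kset_zero_mem (θ : AddCircle T → ℂ) : (0 : L2) ∈ Kset θ :=
  ⟨H2.zero_mem, fun g _ => inner_zero_right g⟩
/-- `K_{θ₁} ⊕ H²₋` is invariant under `S ⊕ S₊` iff `θ₁` is a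
unimodular constant. -/
theorem stmt14_Ktheta_invariant_iff (θ1 : AddCircle T → ℂ) (hθ1 : IsInner θ1) :
    (∀ y ∈ {y : L2 | ∃ x ∈ Kset θ1, ∃ w ∈ (H2m : Set L2), y = x + w},
        D y ∈ {y : L2 | ∃ x ∈ Kset θ1, ∃ w ∈ (H2m : Set L2), y = x + w}) ↔
    ∃ c : ℂ, ‖c‖ = 1 ∧ θ1 =ᵐ[μ] fun _ => c := by
  have hθm : AEStronglyMeasurable θ1 μ := hθ1.meas
  have hθb : ∀ᵐ t ∂μ, ‖θ1 t‖ ≤ 1 := hθ1.unimod.mono fun t ht => ht.le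
  constructor
  · intro hyp
    -- Step 1: `Kset θ1` is invariant under `Mz`.
    have hKMz : ∀ x ∈ Kset θ1, Mz x ∈ Kset θ1 := by
      intro x hx
      have hy : x ∈ {y : L2 | ∃ x' ∈ Kset θ1, ∃ w ∈ (H2m : Set L2), y = x' + w} :=
        ⟨x, hx, 0, H2m.zero_mem, (add_zero x).symm⟩
      have hD := hyp x hy
      rw [D_eq_Mz_of_memH2 hx.1] at hD
      obtain ⟨x', hx', w', hw', heq⟩ := hD
      have hzx : Mz x ∈ H2 := Mz_mem_H2 hx.1
      have hw0 : w' = 0 := by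
        have hw'H2 : w' ∈ H2 := by
          have h5 : w' = Mz x - x' := by rw [heq]; abel
          rw [h5]; exact H2.sub_mem hzx hx'.1
        have h0 : inner (𝕜 := ℂ) w' w' = 0 :=
          (Submodule.mem_orthogonal H2 w').mp hw' w' hw'H2
        exact inner_self_eq_zero.mp h0
      rw [heq, hw0, add_zero]; exact hx'
    have hKMzPow : ∀ (m : ℕ), ∀ x ∈ Kset θ1, (Mz ^ m) x ∈ Kset θ1 := by
      intro m
      induction m with
      | zero => intro x hx; simpa using hx
      | succ k ih =>
        intro x hx
        rw [pow_succ, Module.End.mul_apply]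
        exact ih _ (hKMz _ hx)
    -- Step 2: the element `f0 = 1 - conj c • θ1` belongs to `Kset θ1`.
    have hθL2 : MemLp θ1 2 μ := memℒp_two_of_bound hθm hθb
    set c := fourierCoeff θ1 0 with hc
    set Θ : L2 := hθL2.toLp θ1 with hΘ
    have hΘcoe : ⇑Θ =ᵐ[μ] θ1 := hθL2.coeFn_toLp
    have hΘH2 : Θ ∈ H2 := mem_H2_of_coeff fun n hn => by
      rw [fourierCoeff_congr_ae hΘcoe]; exact hθ1.coeff n hn
    set E0 : L2 := (fourierLp 2 (0 : ℤ) : L2) with hE0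
    have hE0coe : ⇑E0 =ᵐ[μ] fun _ => (1 : ℂ) :=
      (coeFn_fourierLp 2 0).trans (Filter.Eventually.of_forall fun t => fourier_zero)
    have hE0H2 : E0 ∈ H2 := by
      have := fourierLp_mem_H2 0; simpa [hE0] using this
    set f0 : L2 := E0 - (conj c) • Θ with hf0def
    have hf0coe : ⇑f0 =ᵐ[μ] fun t => 1 - conj c * θ1 t := by
      filter_upwards [Lp.coeFn_sub E0 ((conj c) • Θ), Lp.coeFn_smul (conj c) Θ, hE0coe, hΘcoe]
        with t h1 h2 h3 h4
      show (E0 - (starRingEnd ℂ) c • Θ : L2) t = 1 - conj c * θ1 t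
      rw [h1]
      simp only [Pi.sub_apply, h2, Pi.smul_apply, smul_eq_mul, h3, h4]
    have hf0H2 : f0 ∈ H2 := H2.sub_mem hE0H2 (H2.smul_mem _ hΘH2)
    have hf0K : f0 ∈ Kset θ1 := by
      refine ⟨hf0H2, ?_⟩
      rintro g ⟨u, hu, hgu⟩
      have hIθu : Integrable (fun t => θ1 t * u t) μ :=
        (memL2_mul_of_bound hθm hθb u).integrable one_le_two
      have hIu : Integrable (fun t => (u : AddCircle T → ℂ) t) μ :=
        (Lp.memLp u).integrable one_le_two
      have h2 : inner (𝕜 := ℂ) g f0 = ∫ t, conj (θ1 t * u t - c * u t) ∂μ := by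
        rw [L2_inner_eq]
        refine integral_congr_ae ?_
        filter_upwards [hgu, hf0coe, hθ1.unimod] with t h1 h3 ht
        rw [h1, h3]
        have hcon : conj (θ1 t) * θ1 t = 1 := by
          rw [mul_comm, Complex.mul_conj, Complex.normSq_eq_norm_sq, ht]
          norm_num
        simp only [map_sub, map_mul]
        linear_combination (-(starRingEnd ℂ c * starRingEnd ℂ (u t))) * hcon
      rw [h2, integral_conj, integral_sub hIθu (hIu.const_mul c), integral_const_mul,
        pairing hθ1.memBall hu, fourierCoeff_zero_eq_integral]
      simp only [map_sub, map_mul]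
      rw [← fourierCoeff_zero_eq_integral θ1, ← fourierCoeff_zero_eq_integral
        (fun t => (u : AddCircle T → ℂ) t), ← hc]
      ring
    -- Step 3: all Fourier coefficients of `conj θ1 * f0` vanish, hence `f0 = 0`.
    have hFm : MemLp (fun t => conj (θ1 t) * f0 t) 2 μ :=
      memL2_mul_of_bound ((RCLike.continuous_conj (K := ℂ)).comp_aestronglyMeasurable hθm)
        (hθb.mono fun t ht => by simpa using ht) f0
    set G : L2 := hFm.toLp _ with hG
    have hGcoe : ⇑G =ᵐ[μ] fun t => conj (θ1 t) * f0 t := hFm.coeFn_toLp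
    have hGcoeff : ∀ n : ℤ, fourierCoeff (⇑G) n = 0 := by
      intro n
      rw [fourierCoeff_congr_ae hGcoe]
      rcases le_or_gt 0 n with hn | hn
      · set u : L2 := (fourierLp 2 n : L2) with hu
        have huH2 : u ∈ H2 := by
          have := fourierLp_mem_H2 n.toNat
          rwa [Int.toNat_of_nonneg hn] at this
        set gn : L2 := (memL2_mul_of_bound hθm hθb u).toLp _ with hgn
        have hgncoe : ⇑gn =ᵐ[μ] fun t => θ1 t * u t := MemLp.coeFn_toLp _
        have hmem : gn ∈ mulSet θ1 (H2 : Set L2) := ⟨u, huH2, hgncoe⟩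
        have h0 : inner (𝕜 := ℂ) gn f0 = 0 := hf0K.2 gn hmem
        rw [L2_inner_eq] at h0
        rw [← h0]
        refine integral_congr_ae ?_
        filter_upwards [hgncoe, coeFn_fourierLp 2 n] with t h1 h2
        have h2' : (u : AddCircle T → ℂ) t = fourier n t := by rw [hu]; exact h2
        simp only [smul_eq_mul, h1, h2', map_mul, ← fourier_neg]
        ring
      · set m : ℕ := (-n).toNat with hm
        have hmn : ((m : ℕ) : ℤ) = -n := Int.toNat_of_nonneg (by omega)
        set gθ : L2 := (memL2_mul_of_bound hθm hθb E0).toLp _ with hgθ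
        have hgθcoe : ⇑gθ =ᵐ[μ] fun t => θ1 t * E0 t := MemLp.coeFn_toLp _
        have hmemθ : gθ ∈ mulSet θ1 (H2 : Set L2) := ⟨E0, hE0H2, hgθcoe⟩
        have hK : (Mz ^ m) f0 ∈ Kset θ1 := hKMzPow m f0 hf0K
        have h0 : inner (𝕜 := ℂ) gθ ((Mz ^ m) f0) = 0 := hK.2 gθ hmemθ
        rw [L2_inner_eq] at h0
        rw [← h0]
        refine integral_congr_ae ?_
        filter_upwards [hgθcoe, hE0coe, Mz_pow_coeFn m f0] with t h1 h2 h3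
        simp only [smul_eq_mul, h1, h2, h3, hmn, map_mul, map_one, mul_one]
        ring
    have hG0 : G = 0 := by
      have hrepr : (@fourierBasis T _).repr G = 0 := by
        apply lp.ext
        funext n
        have := hGcoeff n
        rw [← fourierBasis_repr] at this
        simpa using this
      exact ((@fourierBasis T _).repr.map_eq_zero_iff).mp hrepr
    have hF0 : (fun t => conj (θ1 t) * f0 t) =ᵐ[μ] (fun _ => (0 : ℂ)) := by
      have h1 : ⇑G =ᵐ[μ] (fun _ => (0 : ℂ)) := by
        rw [hG0]
        exact Lp.coeFn_zero ℂ 2 μ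
      exact hGcoe.symm.trans h1
    have hf00 : ⇑f0 =ᵐ[μ] fun _ => (0 : ℂ) := by
      filter_upwards [hF0, hθ1.unimod] with t h1 h2
      have hne : conj (θ1 t) ≠ 0 := by
        simp only [ne_eq, map_eq_zero]
        intro h3
        rw [h3] at h2
        simp at h2
      exact (mul_eq_zero.mp h1).resolve_left hne
    have hae : ∀ᵐ t ∂μ, conj c * θ1 t = 1 := by
      filter_upwards [hf0coe, hf00] with t h1 h2
      have h3 : (1 : ℂ) - conj c * θ1 t = 0 := by rw [← h1]; exact h2
      linear_combination -h3
    have hμne : (Filter.NeBot (MeasureTheory.ae μ)) := by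
      refine ae_neBot.mpr ?_
      intro h
      have h1 := measure_univ (μ := μ)
      rw [h] at h1
      simp at h1
    obtain ⟨t0, h1, h2⟩ := (hae.and hθ1.unimod).exists
    have hcnorm : ‖c‖ = 1 := by
      have h3 : ‖conj c * θ1 t0‖ = 1 := by rw [h1]; simp
      rw [norm_mul, h2, mul_one] at h3
      simpa using h3
    refine ⟨c, hcnorm, ?_⟩
    filter_upwards [hae] with t ht
    have hcc : c * conj c = 1 := by
      rw [Complex.mul_conj, Complex.normSq_eq_norm_sq, hcnorm]
      norm_num
    calc θ1 t = (c * conj c) * θ1 t := by rw [hcc, one_mul]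
      _ = c * (conj c * θ1 t) := by ring
      _ = c := by rw [ht, mul_one]
  · rintro ⟨c, hcnorm, hcae⟩ y hy
    obtain ⟨x, hx, w, hw, rfl⟩ := hy
    have hc0 : c ≠ 0 := by
      intro h
      rw [h] at hcnorm
      simp at hcnorm
    have hx0 : x = 0 := by
      have hallu : ∀ u : L2, u ∈ H2 → inner (𝕜 := ℂ) u x = 0 := by
        intro u hu
        have hmem : (c • u) ∈ mulSet θ1 (H2 : Set L2) := by
          refine ⟨u, hu, ?_⟩
          filter_upwards [Lp.coeFn_smul c u, hcae] with t h1 h2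
          rw [h1, Pi.smul_apply, smul_eq_mul, h2]
        have h3 := hx.2 _ hmem
        rw [inner_smul_left] at h3
        have hcc : (starRingEnd ℂ) c ≠ 0 := by simpa using hc0
        exact (mul_eq_zero.mp h3).resolve_left hcc
      exact inner_self_eq_zero.mp (hallu x hx.1)
    have hDw : D (x + w) = Pminus (Mz w) := by
      rw [hx0, zero_add]
      show Mz (Pplus w) + Pminus (Mz (Pminus w)) = Pminus (Mz w)
      have h1 : Pplus w = 0 := by
        have h3 : H2.orthogonalProjectionOnto w = 0 :=
          Submodule.orthogonalProjectionOnto_apply_of_mem_orthogonal hw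
        show H2.subtype (H2.orthogonalProjectionOnto w) = 0
        rw [h3]; rfl
      have h2 : Pminus w = w := (Submodule.starProjection_eq_self_iff).mpr hw
      rw [h1, h2, map_zero, zero_add]
    rw [hDw]
    exact ⟨0, Kset_zero_mem θ1, Pminus (Mz w),
      Submodule.coe_mem (H2m.orthogonalProjectionOnto (Mz w)), (zero_add _).symm⟩

end SS
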